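/- In a proper unital *-ring A with A_Σ salient: for all a, b ∈ A_+, if a product c_1 c_2 ⋯ c_n with each c_k ∈ {a,b} equals 0, then ab = 0. -/

import Mathlib

open Pointwise

/-- Finite sums of elements of the form `star a * a`. -/
def sSums (A : Type*) [Ring A] [StarRing A] : Set A :=
  (AddSubmonoid.closure {x : A | ∃ a : A, x = star a * a} : Set A)

/-- The *-positive elements. -/
def pos (A : Type*) [Ring A] [StarRing A] : Set A :=
  {a : A | ∃ n : ℕ, 0 < n ∧ n • a ∈ sSums A}

/-- The *-accretive elements. -/
def accr (A : Type*) [Ring A] [StarRing A] : Set A :=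
  {a : A | a + star a ∈ pos A}

/-- The order `a ⪯ b ⟺ b - a ∈ 𝔯`. -/
def ple {A : Type*} [Ring A] [StarRing A] (a b : A) : Prop := b - a ∈ accr A

/-- The cone `𝔠`. -/
def cone (A : Type*) [Ring A] [StarRing A] : Set A :=
  {a : A | ∃ n : ℕ, 0 < n ∧ ple (star a * a) (n • a)}

/-- The ball `𝔅`. -/
def ball (A : Type*) [Ring A] [StarRing A] : Set A :=
  {a : A | ple (star a * a) 1}

/-! Positive elements are self-adjoint, because properness and salience make `A` torsion
free. For positive `p`, `z⋆ p z = 0` forces `p z = 0`: write `n p = ∑ cᵢ⋆ cᵢ`, so that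
`∑ (cᵢ z)⋆ (cᵢ z) = 0`, and salience kills every summand.

Read a zero word `y v` in the letters `x, y` from the left. If `y` recurs, `v = xᵏ y u`, and
`(y u)⋆ xᵏ (y u) = u⋆ (y v) = 0` gives `xᵏ y u = 0`: the word loses its first letter.
Otherwise `y xᵏ = 0`, and properness collapses the run of `x`'s: `y x = 0`. -/

section

variable {A : Type*} [Ring A] [StarRing A]

theorem star_mul_self_mem_sSums (z : A) : star z * z ∈ sSums A :=
  AddSubmonoid.subset_closure ⟨z, rfl⟩

theorem isSelfAdjoint_of_mem_sSums {s : A} (hs : s ∈ sSums A) : IsSelfAdjoint s := by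
  induction hs using AddSubmonoid.closure_induction with
  | mem _ hc => obtain ⟨c, rfl⟩ := hc; exact .star_mul_self c
  | zero => exact .zero A
  | add _ _ _ _ hs ht => exact hs.add ht

theorem star_mul_mul_mem_sSums {s : A} (hs : s ∈ sSums A) (z : A) :
    star z * s * z ∈ sSums A := by
  induction hs using AddSubmonoid.closure_induction with
  | mem _ hc =>
    obtain ⟨c, rfl⟩ := hc
    simpa [mul_assoc] using star_mul_self_mem_sSums (c * z)
  | zero => rw [mul_zero, zero_mul]; exact zero_mem (AddSubmonoid.closure _)
  | add s t _ _ hs ht => rw [mul_add, add_mul]; exact add_mem hs ht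

theorem star_mul_mul_mem_pos {p : A} (hp : p ∈ pos A) (z : A) : star z * p * z ∈ pos A := by
  obtain ⟨n, hn, hs⟩ := hp
  refine ⟨n, hn, ?_⟩
  rw [← smul_mul_assoc, ← mul_smul_comm]
  exact star_mul_mul_mem_sSums hs z

theorem eq_zero_of_add_eq_zero_of_salient (salient : sSums A ∩ (-sSums A) = {0})
    {s t : A} (hs : s ∈ sSums A) (ht : t ∈ sSums A) (h : s + t = 0) : s = 0 := by
  have hs' : s ∈ -sSums A := by rwa [Set.mem_neg, neg_eq_of_add_eq_zero_right h]
  exact (salient ▸ ⟨hs, hs'⟩ : s ∈ ({0} : Set A))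

theorem eq_zero_of_nsmul_eq_zero (proper : ∀ a : A, star a * a = 0 → a = 0)
    (salient : sSums A ∩ (-sSums A) = {0}) {n : ℕ} (hn : 0 < n) {z : A} (h : n • z = 0) :
    z = 0 := by
  obtain ⟨m, rfl⟩ := Nat.exists_eq_add_one_of_ne_zero hn.ne'
  have hsum : star z * z + m • (star z * z) = 0 := by
    rw [add_comm, ← succ_nsmul, ← mul_smul_comm, h, mul_zero]
  exact proper z <| eq_zero_of_add_eq_zero_of_salient salient (star_mul_self_mem_sSums z)
    (nsmul_mem (star_mul_self_mem_sSums z) m) hsum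

theorem isSelfAdjoint_of_mem_pos (proper : ∀ a : A, star a * a = 0 → a = 0)
    (salient : sSums A ∩ (-sSums A) = {0}) {p : A} (hp : p ∈ pos A) : IsSelfAdjoint p := by
  obtain ⟨n, hn, hs⟩ := hp
  refine sub_eq_zero.mp (eq_zero_of_nsmul_eq_zero proper salient hn ?_)
  rw [nsmul_sub, ← star_nsmul, (isSelfAdjoint_of_mem_sSums hs).star_eq, sub_self]

theorem mem_pos_of_mem_sSums {s : A} (hs : s ∈ sSums A) : s ∈ pos A :=
  ⟨1, one_pos, by rwa [one_smul]⟩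

theorem pow_mem_pos (proper : ∀ a : A, star a * a = 0 → a = 0)
    (salient : sSums A ∩ (-sSums A) = {0}) {p : A} (hp : p ∈ pos A) (k : ℕ) :
    p ^ k ∈ pos A := by
  obtain ⟨j, rfl | rfl⟩ := Nat.even_or_odd' k
  all_goals have hsa := ((isSelfAdjoint_of_mem_pos proper salient hp).pow j).star_eq
  · have h := mem_pos_of_mem_sSums (star_mul_self_mem_sSums (p ^ j))
    rwa [hsa, ← pow_add, ← two_mul] at h
  · have h := star_mul_mul_mem_pos hp (p ^ j)
    rwa [hsa, ← pow_succ, ← pow_add, add_right_comm, ← two_mul] at h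

theorem mul_eq_zero_of_mem_sSums_of_star_mul_mul_eq_zero
    (proper : ∀ a : A, star a * a = 0 → a = 0) (salient : sSums A ∩ (-sSums A) = {0})
    {s z : A} (hs : s ∈ sSums A) (h : star z * s * z = 0) : s * z = 0 := by
  induction hs using AddSubmonoid.closure_induction with
  | mem _ hc =>
    obtain ⟨c, rfl⟩ := hc
    have hcz : c * z = 0 := proper _ (by simpa [mul_assoc] using h)
    rw [mul_assoc, hcz, mul_zero]
  | zero => exact zero_mul z
  | add s t hs ht ihs iht =>
    rw [mul_add, add_mul] at h
    have hs0 := eq_zero_of_add_eq_zero_of_salient salient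
      (star_mul_mul_mem_sSums hs z) (star_mul_mul_mem_sSums ht z) h
    rw [hs0, zero_add] at h
    rw [add_mul, ihs hs0, iht h, add_zero]

theorem mul_eq_zero_of_star_mul_mul_eq_zero
    (proper : ∀ a : A, star a * a = 0 → a = 0) (salient : sSums A ∩ (-sSums A) = {0})
    {p z : A} (hp : p ∈ pos A) (h : star z * p * z = 0) : p * z = 0 := by
  obtain ⟨n, hn, hs⟩ := hp
  refine eq_zero_of_nsmul_eq_zero proper salient hn ?_
  rw [← smul_mul_assoc]
  refine mul_eq_zero_of_mem_sSums_of_star_mul_mul_eq_zero proper salient hs ?_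
  rw [mul_smul_comm, smul_mul_assoc, h, smul_zero]

theorem mul_eq_zero_of_mul_mul_self_eq_zero (proper : ∀ a : A, star a * a = 0 → a = 0)
    {x y : A} (hx : IsSelfAdjoint x) (h : y * x * x = 0) : y * x = 0 :=
  star_eq_zero.mp <| proper _ <| by
    rw [star_star, star_mul, hx.star_eq, ← mul_assoc, h, zero_mul]

theorem mul_eq_zero_of_mul_pow_eq_zero (proper : ∀ a : A, star a * a = 0 → a = 0)
    {x y : A} (hx : IsSelfAdjoint x) : ∀ {k : ℕ}, y * x ^ k = 0 → y * x = 0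
  | 0, h => by rw [pow_zero, mul_one] at h; rw [h, zero_mul]
  | 1, h => by rwa [pow_one] at h
  | k + 2, h => by
    have hsq : y * x ^ k * x * x = 0 := by simpa only [pow_succ, mul_assoc] using h
    have hshorter := mul_eq_zero_of_mul_mul_self_eq_zero proper hx hsq
    rw [mul_assoc, ← pow_succ] at hshorter
    exact mul_eq_zero_of_mul_pow_eq_zero proper hx hshorter

theorem List.eq_replicate_or_eq_replicate_append_cons_of_forall_mem {α : Type*}
    {x y : α} : ∀ {v : List α}, (∀ c ∈ v, c = x ∨ c = y) →
      (∃ k, v = replicate k x) ∨ ∃ k u, v = replicate k x ++ y :: u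
  | [], _ => .inl ⟨0, rfl⟩
  | c :: v, h => by
    obtain rfl | rfl := h c mem_cons_self
    · rcases eq_replicate_or_eq_replicate_append_cons_of_forall_mem
        fun d hd => h d (mem_cons_of_mem c hd) with ⟨k, rfl⟩ | ⟨k, u, rfl⟩
      exacts [.inl ⟨k + 1, rfl⟩, .inr ⟨k + 1, u, rfl⟩]
    · exact .inr ⟨0, v, rfl⟩

theorem mul_eq_zero_or_prod_eq_zero_of_cons_prod_eq_zero
    (proper : ∀ a : A, star a * a = 0 → a = 0) (salient : sSums A ∩ (-sSums A) = {0})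
    {x y : A} (hx : x ∈ pos A) (hy : IsSelfAdjoint y) {v : List A}
    (hv : ∀ c ∈ v, c = x ∨ c = y) (h : (y :: v).prod = 0) : y * x = 0 ∨ v.prod = 0 := by
  rcases List.eq_replicate_or_eq_replicate_append_cons_of_forall_mem hv
    with ⟨k, rfl⟩ | ⟨k, u, rfl⟩
  · rw [List.prod_cons, List.prod_replicate] at h
    exact .inl <|
      mul_eq_zero_of_mul_pow_eq_zero proper (isSelfAdjoint_of_mem_pos proper salient hx) h
  · simp only [List.prod_cons, List.prod_append, List.prod_replicate] at h ⊢
    refine .inr <|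
      mul_eq_zero_of_star_mul_mul_eq_zero proper salient (pow_mem_pos proper salient hx k) ?_
    rw [star_mul, hy.star_eq, mul_assoc, mul_assoc, h, mul_zero]

end

theorem stmt13_general {A : Type*} [Ring A] [StarRing A]
    (proper : ∀ a : A, star a * a = 0 → a = 0)
    (salient : sSums A ∩ (-sSums A) = {0})
    (a b : A) (ha : a ∈ pos A) (hb : b ∈ pos A)
    (l : List A) (hmem : ∀ c ∈ l, c = a ∨ c = b)
    (h : l.prod = 0) : a * b = 0 := by
  have hsa := isSelfAdjoint_of_mem_pos proper salient ha
  have hsb := isSelfAdjoint_of_mem_pos proper salient hb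
  induction l with
  | nil => rw [List.prod_nil] at h; rw [← mul_one (a * b), h, mul_zero]
  | cons c v ih =>
    have hv := fun d hd => hmem d (List.mem_cons_of_mem c hd)
    obtain rfl | rfl := hmem c List.mem_cons_self
    · rcases mul_eq_zero_or_prod_eq_zero_of_cons_prod_eq_zero proper salient hb hsa
        (fun d hd => (hv d hd).symm) h with hab | hv0
      exacts [hab, ih hv hv0]
    · rcases mul_eq_zero_or_prod_eq_zero_of_cons_prod_eq_zero proper salient ha hsb hv h
        with hba | hv0
      · simpa [hsa.star_eq, hsb.star_eq] using congrArg star hba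
      · exact ih hv hv0

theorem stmt13 {A : Type*} [Ring A] [StarRing A]
    (proper : ∀ a : A, star a * a = 0 → a = 0)
    (salient : sSums A ∩ (-sSums A) = {0})
    (a b : A) (ha : a ∈ pos A) (hb : b ∈ pos A)
    (l : List A) (hl : l ≠ []) (hmem : ∀ c ∈ l, c = a ∨ c = b)
    (h : l.prod = 0) : a * b = 0 :=
  stmt13_general proper salient a b ha hb l hmem h
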